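/- arXiv:2404.03594 — 4 statements merged into one kernel-verified Lean document; each statement's English description precedes it below -/
import Mathlib

section
/- The inclusion {V = I_m ⊗ ỹ^⊤ : ỹ ∈ ℝ^n, ỹ ỹ^⊤ ⪯ P} ⊆ {V ∈ ℝ^{m×mn} : V^⊤ V ⪯ I_m ⊗ P} holds for every n×n positive definite P, but the reverse inclusion fails in general; specifically, for m = n = 2 and P = [[p₁₁, p₁₂], [p₁₂, p₂₂]] ≻ 0, setting v = (1/2)(p₁₁ − p₁₂²/p₂₂) > 0 and V = [[0,0,0,0],[√v,0,0,0]], one has V^⊤V ⪯ I_2 ⊗ P but V is not of the form I_2 ⊗ ỹ^⊤ for any ỹ ∈ ℝ². -/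
/-!
If `V = I_m ⊗ ỹᵀ` then `VᵀV = I_m ⊗ ỹỹᵀ`, so `I_m ⊗ P - VᵀV = I_m ⊗ (P - ỹỹᵀ)` is a Kronecker
product of positive semidefinite matrices.

In the counterexample `VᵀV = v e₁e₁ᵀ`, so `I₂ ⊗ P - VᵀV` is block diagonal with blocks
`P - v e₁e₁ᵀ` and `P`. Since `v` is half the Schur complement `p₁₁ - p₁₂²/p₂₂`, the first block
still has positive determinant `det P / 2`. But the only nonzero entry of `V` lies outside the
diagonal blocks, where every `I₂ ⊗ ỹᵀ` vanishes.
-/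

open Matrix Kronecker

/-- The set 𝒮₁ = { V = I_m ⊗ ỹᵀ : ỹỹᵀ ⪯ P }. -/
def S1 (m n : ℕ) (P : Matrix (Fin n) (Fin n) ℝ) : Set (Matrix (Fin m) (Fin m × Fin n) ℝ) :=
  {V | ∃ y : Fin n → ℝ, (P - Matrix.vecMulVec y y).PosSemidef ∧
    V = ((1 : Matrix (Fin m) (Fin m) ℝ) ⊗ₖ Matrix.replicateRow (Fin 1) y).submatrix
          (fun i : Fin m => (i, (0 : Fin 1))) id}

/-- The set 𝒮₂ = { V : VᵀV ⪯ I_m ⊗ P }. -/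
def S2 (m n : ℕ) (P : Matrix (Fin n) (Fin n) ℝ) : Set (Matrix (Fin m) (Fin m × Fin n) ℝ) :=
  {V | (((1 : Matrix (Fin m) (Fin m) ℝ) ⊗ₖ P) - Vᵀ * V).PosSemidef}

noncomputable def Vcex (v : ℝ) : Matrix (Fin 2) (Fin 2 × Fin 2) ℝ :=
  Matrix.of fun i q => if i = 1 ∧ q.1 = 0 ∧ q.2 = 0 then Real.sqrt v else 0


lemma one_kronecker_sub_transpose_mul_self_row {m n R : Type*} [Fintype m] [DecidableEq m]
    [CommRing R] (P : Matrix n n R) (y : n → R) :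
    let V := ((1 : Matrix m m R) ⊗ₖ replicateRow (Fin 1) y).submatrix (fun i => (i, 0)) id
    (1 : Matrix m m R) ⊗ₖ P - Vᵀ * V = (1 : Matrix m m R) ⊗ₖ (P - vecMulVec y y) := by
  ext ⟨i, a⟩ ⟨j, b⟩
  rcases eq_or_ne i j with rfl | hij
  · simp [mul_apply, one_apply, vecMulVec_apply, mul_comm]
  · simp [mul_apply, one_apply, hij, Ne.symm hij]

lemma one_kronecker_sub_single {n R : Type*} [DecidableEq n] [CommRing R] (P : Matrix n n R)
    (a : n) (v : R) :
    (1 : Matrix (Fin 2) (Fin 2) R) ⊗ₖ P - single (0, a) (0, a) v =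
      single 0 0 1 ⊗ₖ (P - single a a v) + single 1 1 1 ⊗ₖ P := by
  ext ⟨i, b⟩ ⟨j, c⟩
  fin_cases i <;> fin_cases j <;> simp [single, one_apply]

lemma posSemidef_fin_two_of {K : Type*} [Field K] [LinearOrder K] [IsStrictOrderedRing K]
    [StarRing K] [TrivialStar K] {a b c : K} (hc : 0 < c) (h : b ^ 2 ≤ a * c) :
    !![a, b; b, c].PosSemidef := by
  refine posSemidef_iff_dotProduct_mulVec.mpr ⟨?_, fun x => ?_⟩
  · ext i j; fin_cases i <;> fin_cases j <;> simp
  · have hsq : c * (star x ⬝ᵥ (!![a, b; b, c] *ᵥ x)) =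
        (b * x 0 + c * x 1) ^ 2 + (a * c - b ^ 2) * x 0 ^ 2 := by
      simp [dotProduct, Fin.sum_univ_two, mulVec]
      ring
    have hdet := sub_nonneg.mpr h
    have : 0 ≤ c * (star x ⬝ᵥ (!![a, b; b, c] *ᵥ x)) := by rw [hsq]; positivity
    exact nonneg_of_mul_nonneg_right (by linarith) hc

theorem S1_subset_S2 (m n : ℕ) (P : Matrix (Fin n) (Fin n) ℝ) : S1 m n P ⊆ S2 m n P := by
  rintro _ ⟨y, hy, rfl⟩
  change PosSemidef _
  rw [one_kronecker_sub_transpose_mul_self_row]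
  exact PosSemidef.one.kronecker hy

lemma Vcex_transpose_mul_self {v : ℝ} (hv : 0 ≤ v) :
    (Vcex v)ᵀ * Vcex v = single (0, 0) (0, 0) v := by
  ext ⟨i, a⟩ ⟨j, b⟩
  fin_cases i <;> fin_cases a <;> fin_cases j <;> fin_cases b <;>
    simp [Vcex, mul_apply, single, Real.mul_self_sqrt hv]

lemma Vcex_mem_S2 {P : Matrix (Fin 2) (Fin 2) ℝ} {v : ℝ} (hv : 0 ≤ v) (hP : P.PosSemidef)
    (hPv : (P - single 0 0 v).PosSemidef) : Vcex v ∈ S2 2 2 P := by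
  change PosSemidef _
  rw [Vcex_transpose_mul_self hv, one_kronecker_sub_single]
  have hsingle (i : Fin 2) : (single i i (1 : ℝ)).PosSemidef := by
    rw [← diagonal_single]; exact .diagonal (Pi.single_nonneg.mpr zero_le_one)
  exact ((hsingle 0).kronecker hPv).add ((hsingle 1).kronecker hP)

lemma Vcex_notMem_S1 (P : Matrix (Fin 2) (Fin 2) ℝ) {v : ℝ} (hv : 0 < v) :
    Vcex v ∉ S1 2 2 P := by
  rintro ⟨y, -, hV⟩
  exact (Real.sqrt_pos.mpr hv).ne' (by simpa [Vcex, one_apply] using congr_fun₂ hV 1 (0, 0))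

theorem stmt3 :
    (∀ (m n : ℕ) (P : Matrix (Fin n) (Fin n) ℝ), P.PosDef → S1 m n P ⊆ S2 m n P) ∧
    (∀ p11 p12 p22 : ℝ, (!![p11, p12; p12, p22]).PosDef →
      0 < (p11 - p12 ^ 2 / p22) / 2 ∧
      Vcex ((p11 - p12 ^ 2 / p22) / 2) ∈ S2 2 2 !![p11, p12; p12, p22] ∧
      Vcex ((p11 - p12 ^ 2 / p22) / 2) ∉ S1 2 2 !![p11, p12; p12, p22]) := by
  refine ⟨fun m n P _ => S1_subset_S2 m n P, fun p11 p12 p22 hP => ?_⟩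
  have hp22 : 0 < p22 := by simpa using hP.diag_pos (i := 1)
  have hdet : 0 < p11 * p22 - p12 ^ 2 := by simpa [det_fin_two_of, sq] using hP.det_pos
  set v := (p11 - p12 ^ 2 / p22) / 2 with hv_def
  have hv_mul : v * p22 = (p11 * p22 - p12 ^ 2) / 2 := by rw [hv_def]; field_simp
  have hv : 0 < v := pos_of_mul_pos_left (hv_mul ▸ half_pos hdet) hp22.le
  have hPv : !![p11, p12; p12, p22] - single 0 0 v = !![p11 - v, p12; p12, p22] := by
    ext i j; fin_cases i <;> fin_cases j <;> simp
  refine ⟨hv, Vcex_mem_S2 hv.le hP.posSemidef ?_, Vcex_notMem_S1 _ hv⟩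
  rw [hPv]
  exact posSemidef_fin_two_of hp22 (by nlinarith)
end

section
/- Let 𝐀 ∈ ℝ^{p×p} be symmetric positive definite, ζ ∈ ℝ^{p×n}, and 𝐐 ∈ ℝ^{n×n} symmetric positive semidefinite. Then {Z ∈ ℝ^{p×n} : (Z − ζ)^⊤ 𝐀 (Z − ζ) ⪯ 𝐐} = {ζ + 𝐀^{-1/2} Υ 𝐐^{1/2} : Υ ∈ ℝ^{p×n}, ‖Υ‖ ≤ 1}. -/
open Matrix Kronecker

noncomputable def specNorm {m n : Type*} [Fintype m] [Fintype n] [DecidableEq n]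
    (A : Matrix m n ℝ) : ℝ :=
  ‖LinearMap.toContinuousLinearMap (Matrix.toEuclideanLin A)‖

/-- The square root of a positive semidefinite matrix, with its definition in the older Mathlib
(removed since). -/
noncomputable def Matrix.PosSemidef.sqrt {n : Type*} [Fintype n] [DecidableEq n] {𝕜 : Type*}
    [RCLike 𝕜] [PartialOrder 𝕜] {A : Matrix n n 𝕜} (hA : A.PosSemidef) : Matrix n n 𝕜 :=
  (hA.1.eigenvectorUnitary : Matrix n n 𝕜) *
    diagonal (fun i => ((√(hA.1.eigenvalues i) : ℝ) : 𝕜)) *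
    (star hA.1.eigenvectorUnitary : Matrix n n 𝕜)

/-! With `S = A^{1/2}` and `R = Q^{1/2}` the constraint reads `(S (Z - ζ))ᴴ (S (Z - ζ)) ⪯ Rᴴ R`, and
`‖Υ‖ ≤ 1` reads `Υᴴ Υ ⪯ 1`, so the theorem is Douglas' factorization lemma for matrices:
`Cᴴ C ⪯ Rᴴ R` iff `C = Υ R` for a contraction `Υ`. For the nontrivial direction take `Υ = C R'`,
where `R R' R = R` and `R R'` is an orthogonal projection. With `P = 1 - R' R` we get
`(C P)ᴴ (C P) ⪯ (R P)ᴴ (R P) = 0`, so `C R' R = C`; and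
`1 - Υᴴ Υ = (1 - R R') + R'ᴴ (Rᴴ R - Cᴴ C) R' ⪰ 0`. -/

open scoped MatrixOrder ComplexOrder

namespace Matrix

variable {m n 𝕜 : Type*} [RCLike 𝕜] [Fintype m] [Fintype n] [DecidableEq n]

theorem PosSemidef.sqrt_eq_cfcSqrt {A : Matrix n n 𝕜} (hA : A.PosSemidef) :
    hA.sqrt = CFC.sqrt A := by
  rw [CFC.sqrt_eq_real_sqrt A hA.nonneg, cfcₙ_eq_cfc, hA.1.cfc_eq, IsHermitian.cfc,
    Unitary.conjStarAlgAut_apply]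
  rfl

theorem IsHermitian.exists_mul_mul_eq_self {R : Matrix n n 𝕜} (hR : R.IsHermitian) :
    ∃ R' : Matrix n n 𝕜, R * R' * R = R ∧ (R * R').IsHermitian := by
  -- Since `0⁻¹ = 0`, `cfc (·⁻¹) R` is the Moore–Penrose inverse of `R`.
  have hcont (f : ℝ → ℝ) : ContinuousOn f (spectrum ℝ R) := R.finite_real_spectrum.continuousOn f
  have hRR' : R * cfc (·⁻¹ : ℝ → ℝ) R = cfc (fun x : ℝ ↦ x * x⁻¹) R := by
    rw [cfc_mul _ _ R (hcont _) (hcont _), cfc_id' ℝ R hR.isSelfAdjoint]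
  refine ⟨cfc (·⁻¹ : ℝ → ℝ) R, ?_, hRR' ▸ cfc_predicate _ R⟩
  nth_rw 3 [← cfc_id' ℝ R hR.isSelfAdjoint]
  rw [hRR', ← cfc_mul _ _ R (hcont _) (hcont _)]
  simp only [mul_inv_mul_cancel, cfc_id' ℝ R hR.isSelfAdjoint]

omit [DecidableEq n] in
theorem eq_zero_of_posSemidef_neg_conjTranspose_mul_self {M : Matrix m n 𝕜}
    (h : (-(Mᴴ * M)).PosSemidef) : M = 0 := by
  refine conjTranspose_mul_self_eq_zero.mp
    (le_antisymm ?_ (posSemidef_conjTranspose_mul_self M).nonneg)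
  rwa [le_iff, zero_sub]

theorem mul_mul_eq_self_of_posSemidef_sub {R R' : Matrix n n 𝕜} {C : Matrix m n 𝕜}
    (hR : R * R' * R = R) (h : (Rᴴ * R - Cᴴ * C).PosSemidef) : C * R' * R = C := by
  generalize hP : 1 - R' * R = P
  have hRP : R * P = 0 := by
    rw [← hP, Matrix.mul_sub, Matrix.mul_one, ← Matrix.mul_assoc, hR, sub_self]
  have hCP : C * P = 0 := by
    apply eq_zero_of_posSemidef_neg_conjTranspose_mul_self
    convert h.conjTranspose_mul_mul_same P using 1
    rw [Matrix.mul_sub, Matrix.sub_mul, ← Matrix.mul_assoc Pᴴ Rᴴ, ← conjTranspose_mul,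
      Matrix.mul_assoc _ R P, hRP, ← Matrix.mul_assoc Pᴴ Cᴴ, ← conjTranspose_mul]
    simp [Matrix.mul_assoc]
  rwa [← hP, Matrix.mul_sub, Matrix.mul_one, sub_eq_zero, eq_comm, ← Matrix.mul_assoc] at hCP

theorem posSemidef_one_sub_of_posSemidef_sub {R R' : Matrix n n 𝕜} {C : Matrix m n 𝕜}
    (hR : R * R' * R = R) (hP : (R * R').IsHermitian) (h : (Rᴴ * R - Cᴴ * C).PosSemidef) :
    (1 - (C * R')ᴴ * (C * R')).PosSemidef := by
  have hPP : R * R' * (R * R') = R * R' := by rw [← Matrix.mul_assoc, hR]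
  have hRR : R'ᴴ * (Rᴴ * R) * R' = R * R' := by
    calc R'ᴴ * (Rᴴ * R) * R' = (R * R')ᴴ * (R * R') := by
          rw [conjTranspose_mul]; simp only [Matrix.mul_assoc]
      _ = R * R' := by rw [hP.eq, hPP]
  generalize R * R' = P at hP hPP hRR
  have h1P : (1 - P)ᴴ * (1 - P) = 1 - P := by
    rw [conjTranspose_sub, conjTranspose_one, hP.eq, Matrix.sub_mul, Matrix.mul_sub,
      Matrix.mul_sub, hPP]
    simp
  have hsplit : 1 - (C * R')ᴴ * (C * R') = (1 - P) + R'ᴴ * (Rᴴ * R - Cᴴ * C) * R' := by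
    rw [Matrix.mul_sub, Matrix.sub_mul, hRR, conjTranspose_mul]
    simp only [Matrix.mul_assoc]
    abel
  rw [hsplit]
  exact (h1P ▸ posSemidef_conjTranspose_mul_self _).add (h.conjTranspose_mul_mul_same R')

theorem IsHermitian.posSemidef_mul_self_sub_iff {R : Matrix n n 𝕜} (hR : R.IsHermitian)
    (C : Matrix m n 𝕜) :
    (R * R - Cᴴ * C).PosSemidef ↔ ∃ Υ : Matrix m n 𝕜, (1 - Υᴴ * Υ).PosSemidef ∧ C = Υ * R := by
  nth_rw 1 [← hR.eq]
  constructor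
  · intro h
    obtain ⟨R', hRR'R, hRR'⟩ := hR.exists_mul_mul_eq_self
    exact ⟨C * R', posSemidef_one_sub_of_posSemidef_sub hRR'R hRR' h,
      (mul_mul_eq_self_of_posSemidef_sub hRR'R h).symm⟩
  · rintro ⟨Υ, hΥ, rfl⟩
    convert hΥ.conjTranspose_mul_mul_same R using 1
    rw [Matrix.mul_sub, Matrix.sub_mul, conjTranspose_mul]
    simp only [Matrix.mul_one, Matrix.mul_assoc]

theorem setOf_posSemidef_mul_self_sub_eq [DecidableEq m] {S : Matrix m m 𝕜} {R : Matrix n n 𝕜}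
    (hS : S.IsHermitian) (hSu : IsUnit S) (hR : R.IsHermitian) (ζ : Matrix m n 𝕜) :
    {Z : Matrix m n 𝕜 | (R * R - (Z - ζ)ᴴ * (S * S) * (Z - ζ)).PosSemidef} =
      {Z | ∃ Υ : Matrix m n 𝕜, (1 - Υᴴ * Υ).PosSemidef ∧ Z = ζ + S⁻¹ * Υ * R} := by
  have := hSu.invertible
  ext Z
  have hgram : (Z - ζ)ᴴ * (S * S) * (Z - ζ) = (S * (Z - ζ))ᴴ * (S * (Z - ζ)) := by
    rw [conjTranspose_mul, hS.eq]
    simp only [Matrix.mul_assoc]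
  rw [Set.mem_ofPred_eq, Set.mem_ofPred_eq, hgram, hR.posSemidef_mul_self_sub_iff]
  refine exists_congr fun Υ => and_congr_right' ?_
  rw [Matrix.mul_assoc, ← sub_eq_iff_eq_add', eq_comm (a := Z - ζ),
    inv_mul_eq_iff_eq_mul_of_invertible, eq_comm]

end Matrix

theorem specNorm_le_one_iff {m n : Type*} [Fintype m] [Fintype n] [DecidableEq n]
    (Υ : Matrix m n ℝ) : specNorm Υ ≤ 1 ↔ (1 - Υᴴ * Υ).PosSemidef := by
  have quadForm_eq (x : n → ℝ) : star x ⬝ᵥ ((1 - Υᴴ * Υ) *ᵥ x) =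
      ‖WithLp.toLp 2 x‖ ^ 2 - ‖toEuclideanLin Υ (WithLp.toLp 2 x)‖ ^ 2 := by
    rw [← real_inner_self_eq_norm_sq, ← real_inner_self_eq_norm_sq,
      EuclideanSpace.inner_eq_star_dotProduct, EuclideanSpace.inner_eq_star_dotProduct,
      sub_mulVec, one_mulVec, ← mulVec_mulVec, dotProduct_sub]
    simp [dotProduct_mulVec, vecMul_transpose, ← vecMul_vecMul, dotProduct_comm]
  rw [specNorm, ContinuousLinearMap.opNorm_le_iff zero_le_one, posSemidef_iff_dotProduct_mulVec,
    and_iff_right (isHermitian_one.sub (isHermitian_conjTranspose_mul_self Υ)),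
    (WithLp.equiv 2 (n → ℝ)).forall_congr_left]
  refine forall_congr' fun x => ?_
  rw [quadForm_eq, sub_nonneg, one_mul, LinearMap.coe_toContinuousLinearMap', WithLp.equiv_symm_apply,
    sq_le_sq₀ (norm_nonneg _) (norm_nonneg _)]

theorem stmt6 (p n : ℕ) (A : Matrix (Fin p) (Fin p) ℝ) (hA : A.PosDef)
    (ζ : Matrix (Fin p) (Fin n) ℝ) (Q : Matrix (Fin n) (Fin n) ℝ) (hQ : Q.PosSemidef) :
    {Z : Matrix (Fin p) (Fin n) ℝ | (Q - (Z - ζ)ᵀ * A * (Z - ζ)).PosSemidef} =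
      {Z | ∃ Υ : Matrix (Fin p) (Fin n) ℝ, specNorm Υ ≤ 1 ∧
        Z = ζ + hA.posSemidef.sqrt⁻¹ * Υ * hQ.sqrt} := by
  have h := setOf_posSemidef_mul_self_sub_eq (CFC.sqrt_nonneg A).isSelfAdjoint
    ((CFC.isUnit_sqrt_iff A hA.posSemidef.nonneg).mpr hA.isUnit)
    (CFC.sqrt_nonneg Q).isSelfAdjoint ζ
  rw [CFC.sqrt_mul_sqrt_self A hA.posSemidef.nonneg, CFC.sqrt_mul_sqrt_self Q hQ.nonneg] at h
  simp_rw [hA.posSemidef.sqrt_eq_cfcSqrt, hQ.sqrt_eq_cfcSqrt, specNorm_le_one_iff,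
    ← conjTranspose_eq_transpose_of_trivial]
  exact h
end

section
/- (Nonstrict Petersen-type scalarization.) Let M = M^⊤ ∈ ℝ^{q×q}, and let E ∈ ℝ^{q×p} with E ≠ 0 and F ∈ ℝ^{r×q} with F ≠ 0. Then M + EΥF + (EΥF)^⊤ ⪯ 0 for all Υ ∈ ℝ^{p×r} with ‖Υ‖ ≤ 1 if and only if there exists σ > 0 such that M + σ⁻¹ E E^⊤ + σ F^⊤ F ⪯ 0. -/
/-!
The supremum of the cross term `2 xᵀ E Υ F x` over contractions `Υ` is `2 ‖Eᵀ x‖ ‖F x‖`, attained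
by a rank-one `Υ`. So the robust inequality says that the quadratic form
`Q₁ (x, u) = -xᵀ M x - 2 ⟪Eᵀ x, u⟫` is nonnegative wherever `Q₂ (x, u) = ‖F x‖² - ‖u‖²` is.
As `F ≠ 0`, `Q₂` takes a positive value, and the S-lemma gives `σ ≥ 0` with `σ Q₂ ≤ Q₁`;
`E ≠ 0` forces `σ > 0`, and taking `u = σ⁻¹ Eᵀ x` yields the scalarized inequality. The converse is
Young's inequality `2 ⟪a, b⟫ ≤ σ⁻¹ ‖a‖² + σ ‖b‖²`.

The S-lemma follows from Dines' theorem (the joint range of two real quadratic forms is convex) by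
separating that range from the open quadrant `{u < 0 < v}`.
-/

open Matrix Kronecker

lemma nonneg_of_forall_pos_nonneg_mul_add {a b : ℝ} (h : ∀ t : ℝ, 0 < t → 0 ≤ t * a + b) :
    0 ≤ a := by
  by_contra! ha
  have key := h ((|b| + 1) / -a) (div_pos (by positivity) (neg_pos.2 ha))
  rw [div_mul_eq_mul_div, div_neg, mul_div_cancel_right₀ _ ha.ne] at key
  linarith [le_abs_self b]

namespace QuadraticMap

variable {V : Type*} [AddCommGroup V] [Module ℝ V]

lemma map_smul_add_smul (Q : QuadraticMap ℝ V ℝ) (s t : ℝ) (x y : V) :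
    Q (s • x + t • y) = s ^ 2 * Q x + s * t * polar Q x y + t ^ 2 * Q y := by
  have hpolar : polar Q (s • x) (t • y) = s * t * polar Q x y := by
    rw [polar_smul_left, polar_smul_right, smul_eq_mul, smul_eq_mul]
    ring
  rw [polar, QuadraticMap.map_smul, QuadraticMap.map_smul, smul_eq_mul, smul_eq_mul] at hpolar
  linear_combination hpolar

lemma map_rotation_add_map_rotation (Q : QuadraticMap ℝ V ℝ) {c s : ℝ} (h : c ^ 2 + s ^ 2 = 1)
    (x y : V) : Q (c • x + s • y) + Q ((-s) • x + c • y) = Q x + Q y := by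
  rw [map_smul_add_smul, map_smul_add_smul]
  linear_combination (Q x + Q y) * h

lemma exists_map_pair_eq_of_parallel (Q₁ Q₂ : QuadraticMap ℝ V ℝ) {T₁ T₂ : ℝ} {v : V}
    (hpar : T₂ * Q₁ v = T₁ * Q₂ v) (hpos : 0 < T₁ * Q₁ v + T₂ * Q₂ v) :
    ∃ z, Q₁ z = T₁ ∧ Q₂ z = T₂ := by
  have hscale : 0 ≤ (T₁ ^ 2 + T₂ ^ 2) / (T₁ * Q₁ v + T₂ * Q₂ v) := by positivity
  refine ⟨√((T₁ ^ 2 + T₂ ^ 2) / (T₁ * Q₁ v + T₂ * Q₂ v)) • v, ?_, ?_⟩ <;>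
    rw [QuadraticMap.map_smul, Real.mul_self_sqrt hscale, smul_eq_mul, div_mul_eq_mul_div,
      div_eq_iff hpos.ne']
  · linear_combination T₂ * hpar
  · linear_combination -T₁ * hpar

lemma exists_map_pair_eq_add (Q₁ Q₂ : QuadraticMap ℝ V ℝ) (x y : V) :
    ∃ z, Q₁ z = Q₁ x + Q₁ y ∧ Q₂ z = Q₂ x + Q₂ y := by
  set T₁ := Q₁ x + Q₁ y
  set T₂ := Q₂ x + Q₂ y
  by_cases hT : T₁ = 0 ∧ T₂ = 0
  · exact ⟨0, by simp [hT.1], by simp [hT.2]⟩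
  have hTpos : 0 < T₁ ^ 2 + T₂ ^ 2 := by
    by_contra! h
    exact hT ⟨by nlinarith, by nlinarith⟩
  -- `P` vanishes exactly where the image is parallel to `(T₁, T₂)`. A quarter turn of `(x, y)`
  -- carries `P x` to `P y = -P x`, so `P` vanishes somewhere along the rotation.
  set P := T₂ • Q₁ - T₁ • Q₂
  have hP : ∀ v, P v = T₂ * Q₁ v - T₁ * Q₂ v := fun v => rfl
  have hPxy : P y = -P x := by rw [hP, hP]; linear_combination
  obtain ⟨t, -, ht⟩ : ∃ t ∈ Set.uIcc 0 (Real.pi / 2),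
      P (Real.cos t • x + Real.sin t • y) = 0 := by
    refine intermediate_value_uIcc (Continuous.continuousOn ?_) ?_
    · simp only [map_smul_add_smul]
      fun_prop
    · simp only [Real.cos_zero, Real.sin_zero, Real.cos_pi_div_two, Real.sin_pi_div_two,
        one_smul, zero_smul, add_zero, zero_add, hPxy, Set.mem_uIcc]
      exact (le_total (P x) 0).imp (fun h => ⟨h, by linarith⟩) (fun h => ⟨by linarith, h⟩)
  have hrot := fun Q => map_rotation_add_map_rotation Q (Real.cos_sq_add_sin_sq t) x y
  set z := Real.cos t • x + Real.sin t • y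
  set w := (-Real.sin t) • x + Real.cos t • y
  have hw : P w = 0 := by linear_combination hrot P - ht + hPxy
  rw [hP] at ht hw
  have hsum₁ : Q₁ z + Q₁ w = T₁ := hrot Q₁
  have hsum₂ : Q₂ z + Q₂ w = T₂ := hrot Q₂
  rcases lt_or_ge 0 (T₁ * Q₁ z + T₂ * Q₂ z) with hz | hz
  · exact exists_map_pair_eq_of_parallel Q₁ Q₂ (by linarith) hz
  · refine exists_map_pair_eq_of_parallel Q₁ Q₂ (v := w) (by linarith) ?_
    linear_combination hTpos + hz - T₁ * hsum₁ - T₂ * hsum₂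

/-- Dines' theorem. -/
theorem convex_range_pair (Q₁ Q₂ : QuadraticMap ℝ V ℝ) :
    Convex ℝ (Set.range fun z => (Q₁ z, Q₂ z)) := by
  rintro _ ⟨x, rfl⟩ _ ⟨y, rfl⟩ a b ha hb -
  obtain ⟨z, hz₁, hz₂⟩ := exists_map_pair_eq_add Q₁ Q₂ (√a • x) (√b • y)
  refine ⟨z, ?_⟩
  simp only [hz₁, hz₂, QuadraticMap.map_smul, Real.mul_self_sqrt ha, Real.mul_self_sqrt hb,
    Prod.smul_mk, Prod.mk_add_mk]

/-- Yakubovich's S-lemma. -/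
theorem exists_nonneg_mul_le_of_nonneg_imp_nonneg (Q₁ Q₂ : QuadraticMap ℝ V ℝ)
    (himp : ∀ z, 0 ≤ Q₂ z → 0 ≤ Q₁ z) (hslater : ∃ z, 0 < Q₂ z) :
    ∃ σ : ℝ, 0 ≤ σ ∧ ∀ z, σ * Q₂ z ≤ Q₁ z := by
  have hdisj : Disjoint (Set.Iio (0 : ℝ) ×ˢ Set.Ioi 0) (Set.range fun z => (Q₁ z, Q₂ z)) := by
    rw [Set.disjoint_left]
    rintro _ ⟨h₁, h₂⟩ ⟨z, rfl⟩
    exact (himp z h₂.le).not_gt h₁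
  obtain ⟨f, s, hfA, hfR⟩ := geometric_hahn_banach_open ((convex_Iio 0).prod (convex_Ioi 0))
    (isOpen_Iio.prod isOpen_Ioi) (convex_range_pair Q₁ Q₂) hdisj
  set α := f (1, 0)
  set β := f (0, 1)
  have hf : ∀ u v : ℝ, f (u, v) = u * α + v * β := fun u v => by
    rw [← smul_eq_mul u, ← smul_eq_mul v, ← map_smul, ← map_smul, ← map_add]
    simp
  have hs : s ≤ 0 := by simpa [hf] using hfR _ ⟨0, rfl⟩
  have hA : ∀ u v : ℝ, u < 0 → 0 < v → u * α + v * β < 0 := fun u v hu hv =>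
    hf u v ▸ (hfA (u, v) ⟨hu, hv⟩).trans_le hs
  have hα : 0 ≤ α := nonneg_of_forall_pos_nonneg_mul_add (b := -β) fun t ht => by
    linarith [hA (-t) 1 (by linarith) one_pos]
  have hβ : 0 ≤ -β := nonneg_of_forall_pos_nonneg_mul_add (b := α) fun t ht => by
    linarith [hA (-1) t (by norm_num) ht]
  have hR : ∀ z, 0 ≤ α * Q₁ z + β * Q₂ z := fun z =>
    nonneg_of_forall_pos_nonneg_mul_add (b := -s) fun t ht => by
      have := hfR _ ⟨√t • z, rfl⟩
      simp only [QuadraticMap.map_smul, Real.mul_self_sqrt ht.le, smul_eq_mul, hf] at this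
      linarith
  have hαpos : 0 < α := by
    refine hα.lt_of_ne fun hα0 => ?_
    obtain ⟨z, hz⟩ := hslater
    have hβneg : β < 0 := by linarith [hA (-1) 1 (by norm_num) one_pos]
    have := hR z
    rw [← hα0, zero_mul, zero_add] at this
    linarith [mul_neg_of_neg_of_pos hβneg hz]
  refine ⟨-β / α, div_nonneg hβ hαpos.le, fun z => ?_⟩
  rw [div_mul_eq_mul_div, div_le_iff₀ hαpos]
  linarith [hR z]

end QuadraticMap

noncomputable def Matrix.dotProductQuadraticMap {R V n : Type*} [CommSemiring R] [AddCommMonoid V]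
    [Module R V] [Fintype n] (f g : V →ₗ[R] n → R) : QuadraticMap R V R :=
  LinearMap.BilinMap.toQuadraticMap ((dotProductBilin R R).compl₁₂ f g)

@[simp]
lemma Matrix.dotProductQuadraticMap_apply {R V n : Type*} [CommSemiring R] [AddCommMonoid V]
    [Module R V] [Fintype n] (f g : V →ₗ[R] n → R) (z : V) :
    dotProductQuadraticMap f g z = f z ⬝ᵥ g z :=
  rfl

lemma Matrix.exists_mulVec_ne_zero {R m n : Type*} [NonAssocSemiring R] [Fintype n]
    {A : Matrix m n R} (hA : A ≠ 0) : ∃ v, A *ᵥ v ≠ 0 := by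
  by_contra! h
  exact hA (mulVec_injective (funext fun v => by rw [h v, zero_mulVec]))

section DotProduct

variable {n : Type*} [Fintype n]

lemma dotProduct_self_nonneg {R : Type*} [Ring R] [LinearOrder R] [IsStrictOrderedRing R]
    (v : n → R) : 0 ≤ v ⬝ᵥ v :=
  Fintype.sum_nonneg fun i => mul_self_nonneg (v i)

lemma dotProduct_self_pos {R : Type*} [Ring R] [LinearOrder R] [IsStrictOrderedRing R]
    {v : n → R} (hv : v ≠ 0) : 0 < v ⬝ᵥ v :=
  (dotProduct_self_nonneg v).lt_of_ne' (dotProduct_self_eq_zero.not.2 hv)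

lemma sq_dotProduct_le {R : Type*} [CommRing R] [LinearOrder R] [IsStrictOrderedRing R]
    (v w : n → R) : (v ⬝ᵥ w) ^ 2 ≤ (v ⬝ᵥ v) * (w ⬝ᵥ w) := by
  simpa [dotProduct, sq] using Finset.sum_mul_sq_le_sq_mul_sq Finset.univ v w

lemma two_mul_dotProduct_le {K : Type*} [Field K] [LinearOrder K] [IsStrictOrderedRing K]
    {σ : K} (hσ : 0 < σ) (v w : n → K) :
    2 * (v ⬝ᵥ w) ≤ σ⁻¹ * (v ⬝ᵥ v) + σ * (w ⬝ᵥ w) := by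
  have hsq : σ⁻¹ * ((v - σ • w) ⬝ᵥ (v - σ • w))
      = σ⁻¹ * (v ⬝ᵥ v) + σ * (w ⬝ᵥ w) - 2 * (v ⬝ᵥ w) := by
    simp only [sub_dotProduct, dotProduct_sub, smul_dotProduct, dotProduct_smul, smul_eq_mul,
      dotProduct_comm w v]
    field_simp
    ring
  linarith [mul_nonneg (inv_nonneg.2 hσ.le) (dotProduct_self_nonneg (v - σ • w))]

lemma dotProduct_self_eq_norm_sq (v : n → ℝ) : v ⬝ᵥ v = ‖WithLp.toLp 2 v‖ ^ 2 := by
  rw [← real_inner_self_eq_norm_sq, EuclideanSpace.inner_eq_star_dotProduct]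
  simp

end DotProduct

section SpecNorm

variable {m n : Type*} [Fintype m] [Fintype n] [DecidableEq n]

lemma specNorm_le_one_iff_s11 {A : Matrix m n ℝ} :
    specNorm A ≤ 1 ↔ ∀ v, (A *ᵥ v) ⬝ᵥ (A *ᵥ v) ≤ v ⬝ᵥ v := by
  simp only [specNorm, ContinuousLinearMap.opNorm_le_iff zero_le_one, one_mul,
    dotProduct_self_eq_norm_sq, sq_le_sq₀ (norm_nonneg _) (norm_nonneg _)]
  exact (WithLp.equiv 2 (n → ℝ)).symm.forall_congr_right.symm

lemma exists_specNorm_le_one_mulVec_eq {w : n → ℝ} {u : m → ℝ} (h : u ⬝ᵥ u ≤ w ⬝ᵥ w) :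
    ∃ Υ : Matrix m n ℝ, specNorm Υ ≤ 1 ∧ Υ *ᵥ w = u := by
  rcases (dotProduct_self_nonneg w).eq_or_lt with hw | hw
  · refine ⟨0, specNorm_le_one_iff_s11.2 fun v => by simp [dotProduct_self_nonneg], ?_⟩
    rw [zero_mulVec, eq_comm, ← dotProduct_self_eq_zero]
    exact le_antisymm (hw ▸ h) (dotProduct_self_nonneg u)
  · have hΥ : ∀ v, ((w ⬝ᵥ w)⁻¹ • vecMulVec u w) *ᵥ v = ((w ⬝ᵥ v) / (w ⬝ᵥ w)) • u := by
      intro v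
      rw [smul_mulVec, vecMulVec_mulVec, op_smul_eq_smul, smul_smul, inv_mul_eq_div]
    refine ⟨_, specNorm_le_one_iff_s11.2 fun v => ?_, by rw [hΥ, div_self hw.ne', one_smul]⟩
    rw [hΥ, dotProduct_smul, smul_dotProduct, smul_eq_mul, smul_eq_mul, ← mul_assoc]
    calc (w ⬝ᵥ v) / (w ⬝ᵥ w) * ((w ⬝ᵥ v) / (w ⬝ᵥ w)) * (u ⬝ᵥ u)
        ≤ (w ⬝ᵥ v) ^ 2 / (w ⬝ᵥ w) ^ 2 * (w ⬝ᵥ w) := by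
          rw [← sq, div_pow]
          gcongr
      _ ≤ (w ⬝ᵥ w) * (v ⬝ᵥ v) / (w ⬝ᵥ w) ^ 2 * (w ⬝ᵥ w) := by
          gcongr
          exact sq_dotProduct_le w v
      _ = v ⬝ᵥ v := by field_simp

end SpecNorm

section Petersen

variable {k m l : Type*} [Fintype k] [Fintype m] [Fintype l]

lemma posSemidef_neg_iff {N : Matrix k k ℝ} (hN : N.IsHermitian) :
    (-N).PosSemidef ↔ ∀ x, x ⬝ᵥ N *ᵥ x ≤ 0 := by
  simp only [posSemidef_iff_dotProduct_mulVec, hN.neg, true_and, star_trivial, neg_mulVec,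
    dotProduct_neg, neg_nonneg]

lemma dotProduct_mulVec_add_mul_mul_add_transpose (M : Matrix k k ℝ) (E : Matrix k m ℝ)
    (Υ : Matrix m l ℝ) (F : Matrix l k ℝ) (x : k → ℝ) :
    x ⬝ᵥ (M + E * Υ * F + (E * Υ * F)ᵀ) *ᵥ x
      = x ⬝ᵥ M *ᵥ x + 2 * ((Eᵀ *ᵥ x) ⬝ᵥ (Υ *ᵥ (F *ᵥ x))) := by
  rw [add_mulVec, add_mulVec, dotProduct_add, dotProduct_add, dotProduct_transpose_mulVec,
    ← mulVec_mulVec, ← mulVec_mulVec, dotProduct_mulVec x E, ← mulVec_transpose]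
  ring

lemma dotProduct_mulVec_add_smul_add_smul (M : Matrix k k ℝ) (E : Matrix k m ℝ)
    (F : Matrix l k ℝ) (σ τ : ℝ) (x : k → ℝ) :
    x ⬝ᵥ (M + σ • (E * Eᵀ) + τ • (Fᵀ * F)) *ᵥ x
      = x ⬝ᵥ M *ᵥ x + σ * ((Eᵀ *ᵥ x) ⬝ᵥ (Eᵀ *ᵥ x)) + τ * ((F *ᵥ x) ⬝ᵥ (F *ᵥ x)) := by
  rw [add_mulVec, add_mulVec, dotProduct_add, dotProduct_add, smul_mulVec, smul_mulVec,
    dotProduct_smul, dotProduct_smul, ← mulVec_mulVec, ← mulVec_mulVec, dotProduct_mulVec x E,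
    dotProduct_mulVec x Fᵀ, ← mulVec_transpose, ← mulVec_transpose, transpose_transpose,
    smul_eq_mul, smul_eq_mul]

lemma forall_specNorm_le_one_posSemidef_neg_iff [DecidableEq l] {M : Matrix k k ℝ}
    (hM : M.IsHermitian) (E : Matrix k m ℝ) (F : Matrix l k ℝ) :
    (∀ Υ : Matrix m l ℝ, specNorm Υ ≤ 1 → (-(M + E * Υ * F + (E * Υ * F)ᵀ)).PosSemidef) ↔
      ∀ x u, u ⬝ᵥ u ≤ (F *ᵥ x) ⬝ᵥ (F *ᵥ x) → x ⬝ᵥ M *ᵥ x + 2 * ((Eᵀ *ᵥ x) ⬝ᵥ u) ≤ 0 := by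
  have hN : ∀ Υ : Matrix m l ℝ, (M + E * Υ * F + (E * Υ * F)ᵀ).IsHermitian := fun Υ => by
    rw [add_assoc, ← conjTranspose_eq_transpose_of_trivial]
    exact hM.add (isHermitian_add_transpose_self _)
  simp_rw [posSemidef_neg_iff (hN _), dotProduct_mulVec_add_mul_mul_add_transpose]
  constructor
  · intro h x u hu
    obtain ⟨Υ, hΥ, rfl⟩ := exists_specNorm_le_one_mulVec_eq hu
    exact h Υ hΥ x
  · intro h Υ hΥ x
    exact h x _ (specNorm_le_one_iff_s11.1 hΥ _)

lemma posSemidef_neg_add_smul_add_smul_iff {M : Matrix k k ℝ} (hM : M.IsHermitian)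
    (E : Matrix k m ℝ) (F : Matrix l k ℝ) (σ τ : ℝ) :
    (-(M + σ • (E * Eᵀ) + τ • (Fᵀ * F))).PosSemidef ↔
      ∀ x, x ⬝ᵥ M *ᵥ x + σ * ((Eᵀ *ᵥ x) ⬝ᵥ (Eᵀ *ᵥ x)) + τ * ((F *ᵥ x) ⬝ᵥ (F *ᵥ x)) ≤ 0 := by
  have hN : (M + σ • (E * Eᵀ) + τ • (Fᵀ * F)).IsHermitian := by
    simp only [← conjTranspose_eq_transpose_of_trivial]
    exact (hM.add ((isHermitian_mul_conjTranspose_self E).smul (IsSelfAdjoint.all σ))).add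
      ((isHermitian_conjTranspose_mul_self F).smul (IsSelfAdjoint.all τ))
  simp_rw [posSemidef_neg_iff hN, dotProduct_mulVec_add_smul_add_smul]

lemma exists_pos_scalarization_of_cross_bound {M : Matrix k k ℝ} {E : Matrix k m ℝ}
    {F : Matrix l k ℝ} (hE : E ≠ 0) (hF : F ≠ 0)
    (h : ∀ x u, u ⬝ᵥ u ≤ (F *ᵥ x) ⬝ᵥ (F *ᵥ x) → x ⬝ᵥ M *ᵥ x + 2 * ((Eᵀ *ᵥ x) ⬝ᵥ u) ≤ 0) :
    ∃ σ : ℝ, 0 < σ ∧ ∀ x,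
      x ⬝ᵥ M *ᵥ x + σ⁻¹ * ((Eᵀ *ᵥ x) ⬝ᵥ (Eᵀ *ᵥ x)) + σ * ((F *ᵥ x) ⬝ᵥ (F *ᵥ x)) ≤ 0 := by
  let fst := LinearMap.fst ℝ (k → ℝ) (m → ℝ)
  let snd := LinearMap.snd ℝ (k → ℝ) (m → ℝ)
  let Q₁ := -dotProductQuadraticMap fst (M.mulVecLin ∘ₗ fst)
    - 2 • dotProductQuadraticMap (Eᵀ.mulVecLin ∘ₗ fst) snd
  let Q₂ := dotProductQuadraticMap (F.mulVecLin ∘ₗ fst) (F.mulVecLin ∘ₗ fst)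
    - dotProductQuadraticMap snd snd
  have hQ₁ : ∀ x u, Q₁ (x, u) = -(x ⬝ᵥ M *ᵥ x) - 2 * ((Eᵀ *ᵥ x) ⬝ᵥ u) := fun x u => by
    simp [Q₁, fst, snd, mulVec_transpose]
  have hQ₂ : ∀ x u, Q₂ (x, u) = (F *ᵥ x) ⬝ᵥ (F *ᵥ x) - u ⬝ᵥ u := fun x u => by
    simp [Q₂, fst, snd]
  have himp : ∀ z, 0 ≤ Q₂ z → 0 ≤ Q₁ z := by
    rintro ⟨x, u⟩ hz
    rw [hQ₂] at hz
    linarith [hQ₁ x u, h x u (by linarith)]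
  have hslater : ∃ z, 0 < Q₂ z := by
    obtain ⟨x, hx⟩ := exists_mulVec_ne_zero hF
    exact ⟨(x, 0), by simpa [hQ₂] using dotProduct_self_pos hx⟩
  obtain ⟨σ, hσ, hσQ⟩ := QuadraticMap.exists_nonneg_mul_le_of_nonneg_imp_nonneg Q₁ Q₂ himp hslater
  have hσpos : 0 < σ := by
    refine hσ.lt_of_ne fun hσ0 => ?_
    obtain ⟨x, hx⟩ := exists_mulVec_ne_zero (mt transpose_eq_zero.1 hE)
    -- With `σ = 0`, `Q₁ ≥ 0` would fail along `u = t • Eᵀ x` for large `t`.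
    have := nonneg_of_forall_pos_nonneg_mul_add (a := -2 * ((Eᵀ *ᵥ x) ⬝ᵥ (Eᵀ *ᵥ x)))
      (b := -(x ⬝ᵥ M *ᵥ x)) fun t _ => by
        have := hσQ (x, t • (Eᵀ *ᵥ x))
        rw [← hσ0, zero_mul, hQ₁, dotProduct_smul, smul_eq_mul] at this
        linarith
    linarith [dotProduct_self_pos hx]
  refine ⟨σ, hσpos, fun x => ?_⟩
  have := hσQ (x, σ⁻¹ • (Eᵀ *ᵥ x))
  simp only [hQ₁, hQ₂, dotProduct_smul, smul_dotProduct, smul_eq_mul] at this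
  have hcancel : σ * ((F *ᵥ x) ⬝ᵥ (F *ᵥ x) - σ⁻¹ * (σ⁻¹ * ((Eᵀ *ᵥ x) ⬝ᵥ (Eᵀ *ᵥ x))))
      = σ * ((F *ᵥ x) ⬝ᵥ (F *ᵥ x)) - σ⁻¹ * ((Eᵀ *ᵥ x) ⬝ᵥ (Eᵀ *ᵥ x)) := by
    field_simp
  linarith

lemma cross_bound_of_scalarization {M : Matrix k k ℝ} {E : Matrix k m ℝ} {F : Matrix l k ℝ}
    {σ : ℝ} (hσ : 0 < σ)
    (h : ∀ x, x ⬝ᵥ M *ᵥ x + σ⁻¹ * ((Eᵀ *ᵥ x) ⬝ᵥ (Eᵀ *ᵥ x)) + σ * ((F *ᵥ x) ⬝ᵥ (F *ᵥ x)) ≤ 0)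
    (x : k → ℝ) (u : m → ℝ) (hu : u ⬝ᵥ u ≤ (F *ᵥ x) ⬝ᵥ (F *ᵥ x)) :
    x ⬝ᵥ M *ᵥ x + 2 * ((Eᵀ *ᵥ x) ⬝ᵥ u) ≤ 0 := by
  linarith [h x, two_mul_dotProduct_le hσ (Eᵀ *ᵥ x) u, mul_le_mul_of_nonneg_left hu hσ.le]

end Petersen

theorem stmt11 (p q r : ℕ) (M : Matrix (Fin q) (Fin q) ℝ) (hM : M.IsHermitian)
    (E : Matrix (Fin q) (Fin p) ℝ) (hE : E ≠ 0)
    (F : Matrix (Fin r) (Fin q) ℝ) (hF : F ≠ 0) :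
    (∀ Υ : Matrix (Fin p) (Fin r) ℝ, specNorm Υ ≤ 1 →
      (-(M + E * Υ * F + (E * Υ * F)ᵀ)).PosSemidef) ↔
    ∃ σ : ℝ, 0 < σ ∧ (-(M + σ⁻¹ • (E * Eᵀ) + σ • (Fᵀ * F))).PosSemidef := by
  simp_rw [forall_specNorm_le_one_posSemidef_neg_iff hM,
    posSemidef_neg_add_smul_add_smul_iff hM]
  exact ⟨exists_pos_scalarization_of_cross_bound hE hF,
    fun ⟨σ, hσ, h⟩ => cross_bound_of_scalarization hσ h⟩
end

section
/- (Strict Petersen's lemma.) Let M = M^⊤ ∈ ℝ^{q×q}, E ∈ ℝ^{q×p}, F ∈ ℝ^{r×q}. Then M + EΥF + (EΥF)^⊤ ≺ 0 for all Υ ∈ ℝ^{p×r} with ‖Υ‖ ≤ 1 if and only if there exists λ > 0 such that M + λ⁻¹ E E^⊤ + λ F^⊤ F ≺ 0. -/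
/-!
The easy direction is the bound `2 uᵀΥw ≤ λ⁻¹ |u|² + λ |w|²` for a contraction `Υ`. Conversely,
testing the hypothesis on rank-one contractions gives `xᵀMx + 2 |Eᵀx| |Fx| < 0` for `x ≠ 0`.
Suppose no `λ` works, so that `N(λ) = M + λ⁻¹ EEᵀ + λ FᵀF` has a nonnegative top eigenvalue for
every `λ > 0`. For small `λ` its top unit eigenvectors all satisfy `|Eᵀx| ≥ λ |Fx|`, for large `λ`
all satisfy `|Eᵀx| ≤ λ |Fx|`; the maximisers depend upper-semicontinuously on `λ`, so by
connectedness some `λ` has top eigenvectors of both kinds. Their span lies in the top eigenspace,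
and the intermediate value theorem produces a top eigenvector with `|Eᵀx| = λ |Fx|`. For it
`xᵀN(λ)x = xᵀMx + 2 |Eᵀx| |Fx| < 0`, contradicting the sign of the top eigenvalue.
-/

open Matrix Kronecker

open Filter Set Topology Real

namespace Petersen

lemma isHermitian_add_smul_add_smul {ι : Type*} {M A B : Matrix ι ι ℝ} (hM : M.IsHermitian)
    (hA : A.IsHermitian) (hB : B.IsHermitian) (c d : ℝ) : (M + c • A + d • B).IsHermitian :=
  (hM.add (hA.smul (IsSelfAdjoint.all c))).add (hB.smul (IsSelfAdjoint.all d))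

section DotProduct

variable {ι : Type*} [Fintype ι]

lemma dotProduct_self_nonneg (v : ι → ℝ) : 0 ≤ v ⬝ᵥ v := by
  simpa using dotProduct_star_self_nonneg v

lemma dotProduct_sq_le (v w : ι → ℝ) : (v ⬝ᵥ w) ^ 2 ≤ (v ⬝ᵥ v) * (w ⬝ᵥ w) := by
  simpa only [dotProduct, sq] using Finset.sum_mul_sq_le_sq_mul_sq Finset.univ v w

lemma two_mul_dotProduct_le {lam : ℝ} (hlam : 0 < lam) (u v : ι → ℝ) :
    2 * (u ⬝ᵥ v) ≤ lam⁻¹ * (u ⬝ᵥ u) + lam * (v ⬝ᵥ v) := by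
  have key : lam⁻¹ * (u ⬝ᵥ u) + lam * (v ⬝ᵥ v) - 2 * (u ⬝ᵥ v) =
      lam⁻¹ * ((u - lam • v) ⬝ᵥ (u - lam • v)) := by
    simp only [sub_dotProduct, dotProduct_sub, smul_dotProduct, dotProduct_smul, smul_eq_mul,
      dotProduct_comm v u]
    field_simp
    ring
  linarith [mul_nonneg (inv_nonneg.2 hlam.le) (dotProduct_self_nonneg (u - lam • v))]

lemma norm_toLp_sq (v : ι → ℝ) : ‖WithLp.toLp 2 v‖ ^ 2 = v ⬝ᵥ v := by
  rw [← real_inner_self_eq_norm_sq, EuclideanSpace.inner_toLp_toLp, star_trivial]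

lemma smul_dotProduct_mulVec_smul (A : Matrix ι ι ℝ) (c : ℝ) (x : ι → ℝ) :
    c • x ⬝ᵥ A *ᵥ (c • x) = c ^ 2 * (x ⬝ᵥ A *ᵥ x) := by
  rw [mulVec_smul, dotProduct_smul, smul_dotProduct, smul_eq_mul, smul_eq_mul]
  ring

lemma dotProduct_mulVec_add_smul_add_smul (M A B : Matrix ι ι ℝ) (c d : ℝ) (x : ι → ℝ) :
    x ⬝ᵥ (M + c • A + d • B) *ᵥ x = x ⬝ᵥ M *ᵥ x + c * (x ⬝ᵥ A *ᵥ x) + d * (x ⬝ᵥ B *ᵥ x) := by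
  simp only [add_mulVec, smul_mulVec, dotProduct_add, dotProduct_smul, smul_eq_mul]

end DotProduct

lemma specNorm_le_one_iff {κ ρ : Type*} [Fintype κ] [Fintype ρ] [DecidableEq ρ]
    (A : Matrix κ ρ ℝ) : specNorm A ≤ 1 ↔ ∀ v, A *ᵥ v ⬝ᵥ A *ᵥ v ≤ v ⬝ᵥ v := by
  rw [specNorm, ContinuousLinearMap.opNorm_le_iff zero_le_one]
  simp only [one_mul, LinearMap.coe_toContinuousLinearMap', toLpLin_apply]
  constructor
  · intro h v
    rw [← norm_toLp_sq, ← norm_toLp_sq]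
    gcongr
    exact h (WithLp.toLp 2 v)
  · intro h x
    obtain ⟨v, rfl⟩ : ∃ v, x = WithLp.toLp 2 v := ⟨x.ofLp, rfl⟩
    rw [← sq_le_sq₀ (norm_nonneg _) (norm_nonneg _), norm_toLp_sq, norm_toLp_sq]
    exact h v

section UnitSphere

variable {ι : Type*} [Fintype ι]

def unitSphere (ι : Type*) [Fintype ι] : Set (ι → ℝ) := {x | x ⬝ᵥ x = 1}

lemma isCompact_unitSphere : IsCompact (unitSphere ι) := by
  have : unitSphere ι = EuclideanSpace.equiv ι ℝ '' Metric.sphere 0 1 := by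
    ext x
    rw [ContinuousLinearEquiv.image_eq_preimage_symm, mem_preimage, mem_sphere_zero_iff_norm,
      ← pow_eq_one_iff_of_nonneg (norm_nonneg _) two_ne_zero]
    exact (norm_toLp_sq x).symm ▸ Iff.rfl
  exact this ▸ (isCompact_sphere 0 1).image (EuclideanSpace.equiv ι ℝ).continuous

lemma ne_zero_of_mem_unitSphere {x : ι → ℝ} (hx : x ∈ unitSphere ι) : x ≠ 0 := by
  rintro rfl
  simp [unitSphere] at hx

lemma exists_pos_smul_mem_unitSphere {x : ι → ℝ} (hx : x ≠ 0) :
    ∃ c : ℝ, 0 < c ∧ ∃ y ∈ unitSphere ι, x = c • y := by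
  have hpos : 0 < x ⬝ᵥ x := by
    simpa using dotProduct_self_star_pos_iff.2 hx
  have hc : 0 < √(x ⬝ᵥ x) := sqrt_pos.2 hpos
  refine ⟨√(x ⬝ᵥ x), hc, (√(x ⬝ᵥ x))⁻¹ • x, ?_, by rw [smul_smul, mul_inv_cancel₀ hc.ne', one_smul]⟩
  rw [unitSphere, mem_ofPred_eq, smul_dotProduct, dotProduct_smul, smul_eq_mul, smul_eq_mul,
    ← mul_assoc, ← mul_inv, mul_self_sqrt hpos.le, inv_mul_cancel₀ hpos.ne']

lemma posDef_neg_of_forall_ne_zero {A : Matrix ι ι ℝ} (hA : A.IsHermitian)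
    (h : ∀ x ≠ 0, x ⬝ᵥ A *ᵥ x < 0) : (-A).PosDef :=
  .of_dotProduct_mulVec_pos hA.neg fun x hx => by simpa [neg_mulVec] using h x hx

lemma posDef_neg_of_forall_mem_unitSphere {A : Matrix ι ι ℝ} (hA : A.IsHermitian)
    (h : ∀ x ∈ unitSphere ι, x ⬝ᵥ A *ᵥ x < 0) : (-A).PosDef := by
  refine posDef_neg_of_forall_ne_zero hA fun x hx => ?_
  obtain ⟨c, hc, y, hy, rfl⟩ := exists_pos_smul_mem_unitSphere hx
  rw [smul_dotProduct_mulVec_smul]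
  exact mul_neg_of_pos_of_neg (by positivity) (h y hy)

lemma dotProduct_mulVec_neg_of_posDef_neg {A : Matrix ι ι ℝ} (hA : (-A).PosDef) {x : ι → ℝ}
    (hx : x ≠ 0) : x ⬝ᵥ A *ᵥ x < 0 := by
  simpa [neg_mulVec] using hA.dotProduct_mulVec_pos hx

variable [DecidableEq ι]

lemma mulVec_eq_smul_of_isMaxOn {A : Matrix ι ι ℝ} (hA : A.IsHermitian) {x : ι → ℝ}
    (hx : x ∈ unitSphere ι) (hmax : IsMaxOn (fun y => y ⬝ᵥ A *ᵥ y) (unitSphere ι) x) :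
    A *ᵥ x = (x ⬝ᵥ A *ᵥ x) • x := by
  set h := x ⬝ᵥ A *ᵥ x
  have hpsd : (h • 1 - A).PosSemidef := by
    refine .of_dotProduct_mulVec_nonneg ((isHermitian_one.smul (IsSelfAdjoint.all h)).sub hA)
      fun v => ?_
    rcases eq_or_ne v 0 with rfl | hv
    · simp
    obtain ⟨c, -, y, hy, rfl⟩ := exists_pos_smul_mem_unitSphere hv
    have hyA : y ⬝ᵥ A *ᵥ y ≤ h := isMaxOn_iff.1 hmax y hy
    rw [star_trivial, smul_dotProduct_mulVec_smul, sub_mulVec, dotProduct_sub, smul_mulVec,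
      one_mulVec, dotProduct_smul, smul_eq_mul, hy.out, mul_one]
    exact mul_nonneg (sq_nonneg c) (sub_nonneg.2 hyA)
  have := (hpsd.dotProduct_mulVec_zero_iff x).1 (by
    rw [star_trivial, sub_mulVec, dotProduct_sub, smul_mulVec, one_mulVec, dotProduct_smul,
      smul_eq_mul, hx.out, mul_one, sub_self])
  rw [sub_mulVec, smul_mulVec, one_mulVec, sub_eq_zero] at this
  exact this.symm

end UnitSphere

lemma exists_ne_zero_eq_zero_of_nonneg_of_nonpos {V : Type*} [AddCommGroup V] [Module ℝ V]
    [TopologicalSpace V] [ContinuousAdd V] [ContinuousSMul ℝ V] (W : Submodule ℝ V)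
    {Q : V → ℝ} (hQ : Continuous Q) (hQ_smul : ∀ (c : ℝ) (v : V), Q (c • v) = c ^ 2 * Q v)
    {x y : V} (hxW : x ∈ W) (hyW : y ∈ W) (hx₀ : x ≠ 0) (hy₀ : y ≠ 0) (hx : 0 ≤ Q x)
    (hy : Q y ≤ 0) : ∃ z ∈ W, z ≠ 0 ∧ Q z = 0 := by
  rcases hy.eq_or_lt with hy | hy
  · exact ⟨y, hyW, hy₀, hy⟩
  let z : ℝ → V := fun t => (1 - t) • x + t • y
  have hz : ContinuousOn (fun t => Q (z t)) (Icc 0 1) := (hQ.comp (by fun_prop)).continuousOn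
  obtain ⟨t, -, hzt⟩ := intermediate_value_Icc' zero_le_one hz
    ⟨by simpa [z] using hy.le, by simpa [z] using hx⟩
  refine ⟨z t, W.add_mem (W.smul_mem _ hxW) (W.smul_mem _ hyW), fun h₀ => ?_, hzt⟩
  have ht : t ≠ 0 := by
    rintro rfl
    simp [z] at h₀
    exact hx₀ h₀
  -- `t • y = -(1 - t) • x` is impossible, as `Q` has opposite signs on the two sides
  have hQt : t ^ 2 * Q y = (-(1 - t)) ^ 2 * Q x := by
    rw [← hQ_smul, ← hQ_smul, neg_smul]
    exact congrArg Q (eq_neg_of_add_eq_zero_right h₀)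
  have : 0 < t ^ 2 := by positivity
  nlinarith [mul_neg_of_pos_of_neg this hy, sq_nonneg (1 - t)]

section Parametric

variable {X : Type*} [TopologicalSpace X] {S : Set X}

lemma isClosed_setOf_isMaxOn {f : ℝ → X → ℝ} (hf : Continuous fun p : ℝ × X => f p.1 p.2) :
    IsClosed {p : ℝ × X | IsMaxOn (f p.1) S p.2} := by
  simp only [isMaxOn_iff, ofPred_forall]
  exact isClosed_biInter fun y _ =>
    isClosed_le (hf.comp (continuous_fst.prodMk continuous_const)) hf

lemma exists_isMaxOn_nonneg_and_isMaxOn_nonpos (hS : IsCompact S) (hne : S.Nonempty)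
    {f g : ℝ → X → ℝ} (hf : Continuous fun p : ℝ × X => f p.1 p.2)
    (hg : Continuous fun p : ℝ × X => g p.1 p.2) {a b : ℝ} (hab : a ≤ b)
    (ha : ∀ x ∈ S, IsMaxOn (f a) S x → 0 ≤ g a x)
    (hb : ∀ x ∈ S, IsMaxOn (f b) S x → g b x ≤ 0) :
    ∃ s, ∃ x ∈ S, ∃ y ∈ S, IsMaxOn (f s) S x ∧ IsMaxOn (f s) S y ∧ 0 ≤ g s x ∧ g s y ≤ 0 := by
  let T (C : Set ℝ) : Set ℝ :=
    Prod.fst '' (Icc a b ×ˢ S ∩ {p | IsMaxOn (f p.1) S p.2 ∧ g p.1 p.2 ∈ C})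
  have hT {C : Set ℝ} (hC : IsClosed C) : IsClosed (T C) :=
    (((isCompact_Icc.prod hS).inter_right
      ((isClosed_setOf_isMaxOn hf).inter (hC.preimage hg))).image continuous_fst).isClosed
  have hmem {s : ℝ} (hs : s ∈ Icc a b) {x : X} (hx : x ∈ S) (hxmax : IsMaxOn (f s) S x)
      {C : Set ℝ} (hgx : g s x ∈ C) : s ∈ T C :=
    ⟨(s, x), ⟨⟨hs, hx⟩, hxmax, hgx⟩, rfl⟩
  have hmax (s : ℝ) : ∃ x ∈ S, IsMaxOn (f s) S x :=
    hS.exists_isMaxOn hne (hf.comp (Continuous.prodMk_right s)).continuousOn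
  have hcover : Icc a b ⊆ T (Ici 0) ∪ T (Iic 0) := fun s hs => by
    obtain ⟨x, hx, hxmax⟩ := hmax s
    exact (le_total 0 (g s x)).imp (hmem hs hx hxmax) (hmem hs hx hxmax)
  have ha' : (Icc a b ∩ T (Ici 0)).Nonempty := by
    obtain ⟨x, hx, hxmax⟩ := hmax a
    exact ⟨a, left_mem_Icc.2 hab, hmem (left_mem_Icc.2 hab) hx hxmax (ha x hx hxmax)⟩
  have hb' : (Icc a b ∩ T (Iic 0)).Nonempty := by
    obtain ⟨x, hx, hxmax⟩ := hmax b
    exact ⟨b, right_mem_Icc.2 hab, hmem (right_mem_Icc.2 hab) hx hxmax (hb x hx hxmax)⟩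
  obtain ⟨-, -, ⟨⟨s, x⟩, ⟨⟨-, hx⟩, hxmax, hgx⟩, rfl⟩, ⟨⟨s', y⟩, ⟨⟨-, hy⟩, hymax, hgy⟩, rfl⟩⟩ :=
    isPreconnected_closed_iff.1 isPreconnected_Icc _ _ (hT isClosed_Ici) (hT isClosed_Iic)
      hcover ha' hb'
  exact ⟨_, x, hx, y, hy, hxmax, hymax, hgx, hgy⟩

lemma eventually_forall_add_mul_neg {K : Set X} (hK : IsCompact K) {m b : X → ℝ}
    (hm : Continuous m) (hb : Continuous b) (hneg : ∀ x ∈ K, m x < 0) :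
    ∀ᶠ t in 𝓝 0, ∀ x ∈ K, m x + t * b x < 0 := by
  refine hK.eventually_forall_of_forall_eventually fun x hx => ?_
  have hcont : Continuous fun p : ℝ × X => m p.2 + p.1 * b p.2 := by fun_prop
  exact hcont.continuousAt.eventually_lt continuousAt_const (by simpa using hneg x hx)

lemma exists_le_forall_add_two_mul_exp_neg {K : Set X} (hK : IsCompact K) {m a b : X → ℝ}
    (hm : Continuous m) (ha : Continuous a) (hb : Continuous b) (hneg : ∀ x ∈ K, m x < 0) :
    ∃ s₀ s₁, s₀ ≤ s₁ ∧ (∀ x ∈ K, m x + 2 * exp s₀ * b x < 0) ∧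
      ∀ x ∈ K, m x + 2 * (exp s₁)⁻¹ * a x < 0 := by
  have hbot : Tendsto (fun s => 2 * exp s) atBot (𝓝 0) := by
    simpa using tendsto_exp_atBot.const_mul 2
  have htop : Tendsto (fun s => 2 * (exp s)⁻¹) atTop (𝓝 0) := by
    simpa using (tendsto_inv_atTop_zero.comp tendsto_exp_atTop).const_mul 2
  obtain ⟨s₀, hs₀⟩ := (hbot.eventually (eventually_forall_add_mul_neg hK hm hb hneg)).exists
  obtain ⟨s₁, hs₁, hs₀₁⟩ := ((htop.eventually (eventually_forall_add_mul_neg hK hm ha hneg)).and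
    (eventually_ge_atTop s₀)).exists
  exact ⟨s₀, s₁, hs₀₁, hs₀, hs₁⟩

end Parametric

section Balance

variable {μ a b : ℝ}

lemma inv_mul_add_mul_le_two_mul (hμ : 0 < μ) (h : a ≤ μ ^ 2 * b) :
    μ⁻¹ * a + μ * b ≤ 2 * μ * b := by
  have : μ⁻¹ * a ≤ μ * b := by
    rw [inv_mul_le_iff₀ hμ]
    linarith
  linarith

lemma inv_mul_add_mul_le_two_mul_inv (hμ : 0 < μ) (h : μ ^ 2 * b ≤ a) :
    μ⁻¹ * a + μ * b ≤ 2 * μ⁻¹ * a := by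
  have : μ * b ≤ μ⁻¹ * a := by
    rw [le_inv_mul_iff₀ hμ]
    linarith
  linarith

lemma inv_mul_add_mul_eq_two_mul_sqrt_mul_sqrt (hμ : 0 < μ) (hb : 0 ≤ b) (h : a = μ ^ 2 * b) :
    μ⁻¹ * a + μ * b = 2 * (√a * √b) := by
  subst h
  rw [sqrt_mul' _ hb, sqrt_sq hμ.le, mul_assoc, mul_self_sqrt hb]
  field_simp
  ring

end Balance

section SLemma

variable {ι : Type*} [Fintype ι] [DecidableEq ι]

lemma exists_ne_zero_mulVec_eq_smul_and_dotProduct_mulVec_eq_zero {N : Matrix ι ι ℝ}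
    (hN : N.IsHermitian) (G : Matrix ι ι ℝ) {x y : ι → ℝ} (hx : x ∈ unitSphere ι)
    (hy : y ∈ unitSphere ι) (hxmax : IsMaxOn (fun v => v ⬝ᵥ N *ᵥ v) (unitSphere ι) x)
    (hymax : IsMaxOn (fun v => v ⬝ᵥ N *ᵥ v) (unitSphere ι) y) (hGx : 0 ≤ x ⬝ᵥ G *ᵥ x)
    (hGy : y ⬝ᵥ G *ᵥ y ≤ 0) : ∃ z ≠ 0, N *ᵥ z = (x ⬝ᵥ N *ᵥ x) • z ∧ z ⬝ᵥ G *ᵥ z = 0 := by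
  have hxy : y ⬝ᵥ N *ᵥ y = x ⬝ᵥ N *ᵥ x :=
    le_antisymm (isMaxOn_iff.1 hxmax y hy) (isMaxOn_iff.1 hymax x hx)
  let W := Module.End.eigenspace (toLin' N) (x ⬝ᵥ N *ᵥ x)
  have hxW : x ∈ W := by
    rw [Module.End.mem_eigenspace_iff, toLin'_apply]
    exact mulVec_eq_smul_of_isMaxOn hN hx hxmax
  have hyW : y ∈ W := by
    rw [Module.End.mem_eigenspace_iff, toLin'_apply, ← hxy]
    exact mulVec_eq_smul_of_isMaxOn hN hy hymax
  obtain ⟨z, hzW, hz, hGz⟩ := exists_ne_zero_eq_zero_of_nonneg_of_nonpos W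
    (Q := fun v => v ⬝ᵥ G *ᵥ v) (by fun_prop) (smul_dotProduct_mulVec_smul G) hxW hyW
    (ne_zero_of_mem_unitSphere hx) (ne_zero_of_mem_unitSphere hy) hGx hGy
  rw [Module.End.mem_eigenspace_iff, toLin'_apply] at hzW
  exact ⟨z, hz, hzW, hGz⟩

variable {M A B : Matrix ι ι ℝ} (hM : M.IsHermitian) (hA : A.IsHermitian) (hB : B.PosSemidef)
  (h : ∀ x ≠ 0, x ⬝ᵥ M *ᵥ x + 2 * (√(x ⬝ᵥ A *ᵥ x) * √(x ⬝ᵥ B *ᵥ x)) < 0)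
include hM hA hB h

lemma dotProduct_mulVec_neg_of_isMaxOn {μ : ℝ} (hμ : 0 < μ) {x y : ι → ℝ}
    (hx : x ∈ unitSphere ι) (hy : y ∈ unitSphere ι)
    (hxmax : IsMaxOn (fun v => v ⬝ᵥ (M + μ⁻¹ • A + μ • B) *ᵥ v) (unitSphere ι) x)
    (hymax : IsMaxOn (fun v => v ⬝ᵥ (M + μ⁻¹ • A + μ • B) *ᵥ v) (unitSphere ι) y)
    (hx_bal : μ ^ 2 * (x ⬝ᵥ B *ᵥ x) ≤ x ⬝ᵥ A *ᵥ x) (hy_bal : y ⬝ᵥ A *ᵥ y ≤ μ ^ 2 * (y ⬝ᵥ B *ᵥ y)) :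
    x ⬝ᵥ (M + μ⁻¹ • A + μ • B) *ᵥ x < 0 := by
  obtain ⟨z, hz, hNz, hGz⟩ := exists_ne_zero_mulVec_eq_smul_and_dotProduct_mulVec_eq_zero
    (isHermitian_add_smul_add_smul hM hA hB.isHermitian _ _) (A - μ ^ 2 • B) hx hy hxmax hymax
    (by simpa [sub_mulVec, smul_mulVec] using hx_bal)
    (by simpa [sub_mulVec, smul_mulVec] using hy_bal)
  have hbal : z ⬝ᵥ A *ᵥ z = μ ^ 2 * (z ⬝ᵥ B *ᵥ z) := by
    simpa [sub_mulVec, smul_mulVec, sub_eq_zero] using hGz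
  have hNz_neg := h z hz
  rw [← inv_mul_add_mul_eq_two_mul_sqrt_mul_sqrt hμ (by simpa using hB.dotProduct_mulVec_nonneg z)
    hbal, ← add_assoc, ← dotProduct_mulVec_add_smul_add_smul, hNz, dotProduct_smul,
    smul_eq_mul] at hNz_neg
  exact neg_of_mul_neg_left hNz_neg (dotProduct_self_nonneg z)

theorem exists_pos_posDef_neg_add_inv_smul_add_smul :
    ∃ lam : ℝ, 0 < lam ∧ (-(M + lam⁻¹ • A + lam • B)).PosDef := by
  by_contra! hN
  -- parametrise `λ = exp s`, so that the parameter ranges over all of `ℝ`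
  let f (s : ℝ) (x : ι → ℝ) : ℝ := x ⬝ᵥ (M + (exp s)⁻¹ • A + exp s • B) *ᵥ x
  let g (s : ℝ) (x : ι → ℝ) : ℝ := x ⬝ᵥ A *ᵥ x - exp s ^ 2 * (x ⬝ᵥ B *ᵥ x)
  have hf : Continuous fun p : ℝ × (ι → ℝ) => f p.1 p.2 := by
    simp only [f, dotProduct_mulVec_add_smul_add_smul]
    fun_prop (disch := exact fun p => (exp_pos p.1).ne')
  have hpos (s : ℝ) : ∃ y ∈ unitSphere ι, 0 ≤ f s y := by
    by_contra! h'
    exact hN _ (exp_pos s) (posDef_neg_of_forall_mem_unitSphere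
      (isHermitian_add_smul_add_smul hM hA hB.isHermitian _ _) h')
  have hmax_nonneg {s : ℝ} {x : ι → ℝ} (hxmax : IsMaxOn (f s) (unitSphere ι) x) : 0 ≤ f s x :=
    let ⟨y, hy, hfy⟩ := hpos s
    hfy.trans (isMaxOn_iff.1 hxmax y hy)
  have hM_neg (x : ι → ℝ) (hx : x ∈ unitSphere ι) : x ⬝ᵥ M *ᵥ x < 0 := by
    linarith [h x (ne_zero_of_mem_unitSphere hx), mul_nonneg (sqrt_nonneg (x ⬝ᵥ A *ᵥ x))
      (sqrt_nonneg (x ⬝ᵥ B *ᵥ x))]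
  -- at the two ends of the parameter range, the maximisers are forced to one side of the balance
  obtain ⟨s₀, s₁, hs₀₁, hs₀, hs₁⟩ := exists_le_forall_add_two_mul_exp_neg isCompact_unitSphere
    (m := fun x => x ⬝ᵥ M *ᵥ x) (a := fun x => x ⬝ᵥ A *ᵥ x) (b := fun x => x ⬝ᵥ B *ᵥ x)
    (by fun_prop) (by fun_prop) (by fun_prop) hM_neg
  have h₀ (x : ι → ℝ) (hx : x ∈ unitSphere ι) (hxmax : IsMaxOn (f s₀) (unitSphere ι) x) :
      0 ≤ g s₀ x := by
    by_contra! hgx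
    have := inv_mul_add_mul_le_two_mul (exp_pos s₀) (sub_neg.1 hgx).le
    linarith [hmax_nonneg hxmax, dotProduct_mulVec_add_smul_add_smul M A B (exp s₀)⁻¹ (exp s₀) x,
      hs₀ x hx]
  have h₁ (x : ι → ℝ) (hx : x ∈ unitSphere ι) (hxmax : IsMaxOn (f s₁) (unitSphere ι) x) :
      g s₁ x ≤ 0 := by
    by_contra! hgx
    have := inv_mul_add_mul_le_two_mul_inv (exp_pos s₁) (sub_pos.1 hgx).le
    linarith [hmax_nonneg hxmax, dotProduct_mulVec_add_smul_add_smul M A B (exp s₁)⁻¹ (exp s₁) x,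
      hs₁ x hx]
  obtain ⟨s, x, hx, y, hy, hxmax, hymax, hgx, hgy⟩ :=
    exists_isMaxOn_nonneg_and_isMaxOn_nonpos isCompact_unitSphere ((hpos 0).imp fun _ => And.left)
      hf (by fun_prop) hs₀₁ h₀ h₁
  exact (dotProduct_mulVec_neg_of_isMaxOn hM hA hB h (exp_pos s) hx hy hxmax hymax
    (sub_nonneg.1 hgx) (sub_nonpos.1 hgy)).not_ge (hmax_nonneg hxmax)

end SLemma

section Robust

variable {ι κ ρ : Type*} [Fintype ι] [Fintype κ] [Fintype ρ]

lemma dotProduct_mul_mulVec (A : Matrix ι κ ℝ) (B : Matrix κ ι ℝ) (x : ι → ℝ) :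
    x ⬝ᵥ (A * B) *ᵥ x = Aᵀ *ᵥ x ⬝ᵥ B *ᵥ x := by
  rw [← mulVec_mulVec, dotProduct_mulVec, mulVec_transpose]

lemma dotProduct_mulVec_add_add_transpose (M X : Matrix ι ι ℝ) (x : ι → ℝ) :
    x ⬝ᵥ (M + X + Xᵀ) *ᵥ x = x ⬝ᵥ M *ᵥ x + 2 * (x ⬝ᵥ X *ᵥ x) := by
  rw [add_mulVec, add_mulVec, dotProduct_add, dotProduct_add, mulVec_transpose,
    dotProduct_comm x (x ᵥ* X), ← dotProduct_mulVec]
  ring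

variable [DecidableEq ρ]

lemma exists_specNorm_le_one_dotProduct_mulVec_eq (u : κ → ℝ) (w : ρ → ℝ) :
    ∃ Υ : Matrix κ ρ ℝ, specNorm Υ ≤ 1 ∧ u ⬝ᵥ Υ *ᵥ w = √(u ⬝ᵥ u) * √(w ⬝ᵥ w) := by
  set k := √(u ⬝ᵥ u) * √(w ⬝ᵥ w)
  have hk : k ^ 2 = (u ⬝ᵥ u) * (w ⬝ᵥ w) := by
    rw [mul_pow, sq_sqrt (dotProduct_self_nonneg u), sq_sqrt (dotProduct_self_nonneg w)]
  have hmul (v : ρ → ℝ) : (k⁻¹ • vecMulVec u w) *ᵥ v = (k⁻¹ * (w ⬝ᵥ v)) • u := by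
    rw [smul_mulVec, vecMulVec_mulVec, op_smul_eq_smul, smul_smul]
  -- `k⁻¹ = 0` when `k = 0`, so the same formula covers the degenerate case
  refine ⟨k⁻¹ • vecMulVec u w, (specNorm_le_one_iff _).2 fun v => ?_, ?_⟩
  · rw [hmul, smul_dotProduct, dotProduct_smul, smul_eq_mul, smul_eq_mul]
    rcases eq_or_ne k 0 with hk₀ | hk₀
    · simpa [hk₀] using dotProduct_self_nonneg v
    have hk₂ : 0 < k ^ 2 := by positivity
    calc k⁻¹ * (w ⬝ᵥ v) * (k⁻¹ * (w ⬝ᵥ v) * (u ⬝ᵥ u)) = (w ⬝ᵥ v) ^ 2 * (u ⬝ᵥ u) / k ^ 2 := by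
          field_simp
      _ ≤ (w ⬝ᵥ w) * (v ⬝ᵥ v) * (u ⬝ᵥ u) / k ^ 2 := by
          gcongr
          · exact dotProduct_self_nonneg u
          · exact dotProduct_sq_le w v
      _ = v ⬝ᵥ v := by
          rw [div_eq_iff hk₂.ne', hk]
          ring
  · rw [hmul, dotProduct_smul, smul_eq_mul]
    rcases eq_or_ne k 0 with hk₀ | hk₀
    · simp [hk₀]
    calc k⁻¹ * (w ⬝ᵥ w) * (u ⬝ᵥ u) = k⁻¹ * k ^ 2 := by rw [hk]; ring
      _ = k := by field_simp

variable {M : Matrix ι ι ℝ} {E : Matrix ι κ ℝ} {F : Matrix ρ ι ℝ}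

lemma add_two_mul_sqrt_mul_sqrt_neg_of_forall_specNorm_le_one
    (H : ∀ Υ : Matrix κ ρ ℝ, specNorm Υ ≤ 1 → (-(M + E * Υ * F + (E * Υ * F)ᵀ)).PosDef)
    {x : ι → ℝ} (hx : x ≠ 0) :
    x ⬝ᵥ M *ᵥ x + 2 * (√(x ⬝ᵥ (E * Eᵀ) *ᵥ x) * √(x ⬝ᵥ (Fᵀ * F) *ᵥ x)) < 0 := by
  obtain ⟨Υ, hΥ, hu⟩ := exists_specNorm_le_one_dotProduct_mulVec_eq (Eᵀ *ᵥ x) (F *ᵥ x)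
  have := dotProduct_mulVec_neg_of_posDef_neg (H Υ hΥ) hx
  rwa [dotProduct_mulVec_add_add_transpose, Matrix.mul_assoc, dotProduct_mul_mulVec,
    ← mulVec_mulVec, hu, ← dotProduct_mul_mulVec, ← transpose_transpose F,
    ← dotProduct_mul_mulVec, transpose_transpose] at this

lemma posDef_neg_add_mul_mul_add_transpose (hM : M.IsHermitian) {lam : ℝ} (hlam : 0 < lam)
    (h : (-(M + lam⁻¹ • (E * Eᵀ) + lam • (Fᵀ * F))).PosDef) {Υ : Matrix κ ρ ℝ}
    (hΥ : specNorm Υ ≤ 1) : (-(M + E * Υ * F + (E * Υ * F)ᵀ)).PosDef := by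
  have hX : (M + E * Υ * F + (E * Υ * F)ᵀ).IsHermitian := by
    rw [add_assoc, ← conjTranspose_eq_transpose_of_trivial]
    exact hM.add (isHermitian_add_transpose_self _)
  refine posDef_neg_of_forall_ne_zero hX fun x hx => ?_
  have hN := dotProduct_mulVec_neg_of_posDef_neg h hx
  rw [dotProduct_mulVec_add_smul_add_smul, dotProduct_mul_mulVec, dotProduct_mul_mulVec,
    transpose_transpose] at hN
  rw [dotProduct_mulVec_add_add_transpose, Matrix.mul_assoc, dotProduct_mul_mulVec,
    ← mulVec_mulVec]
  have h₁ := two_mul_dotProduct_le hlam (Eᵀ *ᵥ x) (Υ *ᵥ F *ᵥ x)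
  have h₂ := mul_le_mul_of_nonneg_left ((specNorm_le_one_iff Υ).1 hΥ (F *ᵥ x)) hlam.le
  linarith

end Robust

end Petersen

open Petersen in
theorem stmt12 (p q r : ℕ) (M : Matrix (Fin q) (Fin q) ℝ) (hM : M.IsHermitian)
    (E : Matrix (Fin q) (Fin p) ℝ) (F : Matrix (Fin r) (Fin q) ℝ) :
    (∀ Υ : Matrix (Fin p) (Fin r) ℝ, specNorm Υ ≤ 1 →
      (-(M + E * Υ * F + (E * Υ * F)ᵀ)).PosDef) ↔
    ∃ lam : ℝ, 0 < lam ∧ (-(M + lam⁻¹ • (E * Eᵀ) + lam • (Fᵀ * F))).PosDef := by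
  have hEE : (E * Eᵀ).IsHermitian := by simpa using isHermitian_mul_conjTranspose_self E
  have hFF : (Fᵀ * F).PosSemidef := by simpa using posSemidef_conjTranspose_mul_self F
  constructor
  · exact fun H => exists_pos_posDef_neg_add_inv_smul_add_smul hM hEE hFF fun x hx =>
      add_two_mul_sqrt_mul_sqrt_neg_of_forall_specNorm_le_one H hx
  · rintro ⟨lam, hlam, h⟩ Υ hΥ
    exact posDef_neg_add_mul_mul_add_transpose hM hlam h hΥ
end
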